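/- arXiv:2501.09582 — 6 statements merged into one kernel-verified Lean document; each statement's English description precedes it below -/
import Mathlib

section
/- Let k ≥ 2 be an integer. If q ∈ (q_k, 2), then π_q(S_k) ⊆ U_q; that is, every point of I_q admitting a base q expansion that avoids the words 01^k and 10^k has a unique base q expansion. -/
open Set

/-- Projection map: the value of the (0-indexed) digit sequence `a` in base `q`,
`π_q(a) = Σ_{j=0}^∞ a_j q^{-(j+1)}`. -/
noncomputable def piQ (q : ℝ) (a : ℕ → ℝ) : ℝ := ∑' j : ℕ, a j / q ^ (j + 1)

/-- `a` is a sequence of digits in `{0,1}`. -/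
def IsDigitSeq (a : ℕ → ℝ) : Prop := ∀ j, a j = 0 ∨ a j = 1

/-- `a` is a sequence of digits in `{-1,0,1}`. -/
def IsExtDigitSeq (a : ℕ → ℝ) : Prop := ∀ j, a j = -1 ∨ a j = 0 ∨ a j = 1

/-- The set of base-`q` expansions of `x`. -/
def SigmaSet (q x : ℝ) : Set (ℕ → ℝ) := {a | IsDigitSeq a ∧ piQ q a = x}

/-- The interval `I_q = [0, 1/(q-1)]`. -/
def Iq (q : ℝ) : Set ℝ := Set.Icc 0 (1 / (q - 1))

/-- The switch region `J_q = [1/q, 1/(q(q-1))]`. -/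
def Jq (q : ℝ) : Set ℝ := Set.Icc (1 / q) (1 / (q * (q - 1)))

/-- The set of points of `I_q` having exactly `m` base-`q` expansions. -/
def UqM (q : ℝ) (m : ℕ∞) : Set ℝ := {x | x ∈ Iq q ∧ (SigmaSet q x).encard = m}

/-- The set of points of `I_q` having a unique base-`q` expansion. -/
def Uq (q : ℝ) : Set ℝ := UqM q 1

/-- `B_m`: the set of bases `q ∈ (1,2)` for which some point has exactly `m` expansions. -/
def Bset (m : ℕ∞) : Set ℝ := {q | q ∈ Set.Ioo (1 : ℝ) 2 ∧ (UqM q m).Nonempty}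

/-- `x` is the `k`-Bonacci number: the root in `(1,2)` of `x^k = x^{k-1} + ⋯ + x + 1`. -/
def IsBonacci (k : ℕ) (x : ℝ) : Prop :=
  x ∈ Set.Ioo (1 : ℝ) 2 ∧ x ^ k = ∑ i ∈ Finset.range k, x ^ i

/-- `a` contains no occurrence of the word `01^k` as a consecutive block. -/
def AvoidsWord01 (k : ℕ) (a : ℕ → ℝ) : Prop :=
  ∀ i, ¬(a i = 0 ∧ ∀ j, 1 ≤ j → j ≤ k → a (i + j) = 1)

/-- `a` contains no occurrence of the word `10^k` as a consecutive block. -/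
def AvoidsWord10 (k : ℕ) (a : ℕ → ℝ) : Prop :=
  ∀ i, ¬(a i = 1 ∧ ∀ j, 1 ≤ j → j ≤ k → a (i + j) = 0)

/-- `S_k`: the set of `{0,1}`-sequences avoiding the words `01^k` and `10^k`. -/
def Sset (k : ℕ) : Set (ℕ → ℝ) := {a | IsDigitSeq a ∧ AvoidsWord01 k a ∧ AvoidsWord10 k a}

/-- `g_{q,k} = f_1^{-(k-1)} ∘ f_0^{-1}`, where `f_0^{-1}(y) = y/q` and `f_1^{-1}(y) = (y+1)/q`. -/
noncomputable def gMap (q : ℝ) (k : ℕ) (x : ℝ) : ℝ := (fun y => (y + 1) / q)^[k - 1] (x / q)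

/-- The maps `f_0(x) = qx` (for `b = false`) and `f_1(x) = qx - 1` (for `b = true`). -/
noncomputable def fDigit (q : ℝ) (b : Bool) (x : ℝ) : ℝ := if b then q * x - 1 else q * x

/-- `(a, b)` is a bounded gap of `C`: a bounded connected component of `ℝ \ C`. -/
def IsGap (C : Set ℝ) (a b : ℝ) : Prop :=
  a < b ∧ a ∈ C ∧ b ∈ C ∧ Set.Ioo a b ∩ C = ∅

/-- The left endpoint of the bridge of `C` lying immediately to the left of the gap `(a, b)`:
the right endpoint of the nearest gap to the left having diameter at least `b - a`
(or `min C` if there is no such gap). -/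
noncomputable def leftBridgeStart (C : Set ℝ) (a b : ℝ) : ℝ :=
  sSup ({sInf C} ∪ {d | ∃ c, IsGap C c d ∧ d ≤ a ∧ b - a ≤ d - c})

/-- The right endpoint of the bridge of `C` lying immediately to the right of the gap `(a, b)`. -/
noncomputable def rightBridgeEnd (C : Set ℝ) (a b : ℝ) : ℝ :=
  sInf ({sSup C} ∪ {c | ∃ d, IsGap C c d ∧ b ≤ c ∧ b - a ≤ d - c})

/-- The (Newhouse) thickness of a compact set `C ⊆ ℝ`: the infimum over all bounded gaps `G`
of the ratio of the length of the bridge on either side of `G` to the length of `G`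
(`∞` if `C` has no bounded gap). -/
noncomputable def thickness (C : Set ℝ) : ENNReal :=
  ⨅ p : {p : ℝ × ℝ // IsGap C p.1 p.2},
    ENNReal.ofReal
      (min ((p.1.1 - leftBridgeStart C p.1.1 p.1.2) / (p.1.2 - p.1.1))
        ((rightBridgeEnd C p.1.1 p.1.2 - p.1.2) / (p.1.2 - p.1.1)))

/-- `B` is contained in a gap of `A`, i.e. in a connected component of `ℝ \ A`. -/
def ContainedInGap (B A : Set ℝ) : Prop :=
  ∃ x ∈ Aᶜ, B ⊆ connectedComponentIn Aᶜ x

/-- Two sets are interleaved if neither is contained in a gap of the other. -/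
def Interleaved (A B : Set ℝ) : Prop :=
  ¬ContainedInGap B A ∧ ¬ContainedInGap A B

/-- `A` and `B` are `ε`-strongly interleaved: any compact sets within Hausdorff distance `ε`
of `A` and `B` respectively are interleaved. -/
def StronglyInterleaved (ε : ℝ) (A B : Set ℝ) : Prop :=
  ∀ A' B' : Set ℝ, IsCompact A' → IsCompact B' →
    EMetric.hausdorffEdist A A' ≤ ENNReal.ofReal ε →
    EMetric.hausdorffEdist B B' ≤ ENNReal.ofReal ε → Interleaved A' B'

/-- The sequence `0^{k-3}(01^{k-1})^∞` (0-indexed). -/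
noncomputable def seqG (k : ℕ) : ℕ → ℝ := fun j =>
  if j < k - 3 then 0 else if (j - (k - 3)) % k = 0 then 0 else 1

/-- The sequence `1^{k-3}(10^{k-1})^∞` (0-indexed). -/
noncomputable def seqH (k : ℕ) : ℕ → ℝ := fun j =>
  if j < k - 3 then 1 else if (j - (k - 3)) % k = 0 then 1 else 0

/-- The sequence `(1^{k-1}0)^∞` (0-indexed). -/
noncomputable def seqP (k : ℕ) : ℕ → ℝ := fun j => if j % k = k - 1 then 0 else 1


section Aux

variable {q : ℝ} {a : ℕ → ℝ}

lemma r_lt_one (hq1 : 1 < q) : 1 / q < 1 := by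
  rw [div_lt_one (by linarith)]; linarith

lemma summable_r (hq1 : 1 < q) : Summable (fun j : ℕ => (1 / q) ^ (j + 1)) := by
  have h0 : (0:ℝ) ≤ 1 / q := by positivity
  simpa [pow_succ] using
    (summable_geometric_of_lt_one h0 (r_lt_one hq1)).mul_right (1 / q)

lemma tsum_r (hq1 : 1 < q) : ∑' j : ℕ, (1 / q) ^ (j + 1) = 1 / (q - 1) := by
  have h0 : (0:ℝ) ≤ 1 / q := by positivity
  have h := tsum_geometric_of_lt_one h0 (r_lt_one hq1)
  have hq0 : q ≠ 0 := by linarith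
  have hq1' : q - 1 ≠ 0 := by intro h; apply hq0; linarith
  calc ∑' j : ℕ, (1 / q) ^ (j + 1) = ∑' j : ℕ, (1 / q) ^ j * (1 / q) := by
        simp [pow_succ]
    _ = (1 - 1 / q)⁻¹ * (1 / q) := by rw [tsum_mul_right, h]
    _ = 1 / (q - 1) := by
        rw [eq_div_iff (by intro h; apply hq0; linarith)]
        field_simp

lemma term_le (hq1 : 1 < q) (ha : IsDigitSeq a) (j : ℕ) :
    a j / q ^ (j + 1) ≤ (1 / q) ^ (j + 1) := by
  have hp : (0:ℝ) < q ^ (j + 1) := by positivity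
  have h1 : a j ≤ 1 := by rcases ha j with h | h <;> simp [h]
  calc a j / q ^ (j + 1) ≤ 1 / q ^ (j + 1) := by gcongr
    _ = (1 / q) ^ (j + 1) := by rw [one_div_pow]

lemma term_nonneg (hq1 : 1 < q) (ha : IsDigitSeq a) (j : ℕ) :
    0 ≤ a j / q ^ (j + 1) := by
  have hp : (0:ℝ) < q ^ (j + 1) := by positivity
  rcases ha j with h | h <;> rw [h] <;> positivity

lemma summable_digit (hq1 : 1 < q) (ha : IsDigitSeq a) :
    Summable (fun j => a j / q ^ (j + 1)) :=
  Summable.of_nonneg_of_le (term_nonneg hq1 ha) (term_le hq1 ha) (summable_r hq1)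

lemma piQ_nonneg (hq1 : 1 < q) (ha : IsDigitSeq a) : 0 ≤ piQ q a :=
  tsum_nonneg (term_nonneg hq1 ha)

lemma piQ_le (hq1 : 1 < q) (ha : IsDigitSeq a) : piQ q a ≤ 1 / (q - 1) := by
  rw [← tsum_r hq1]
  exact Summable.tsum_le_tsum (term_le hq1 ha) (summable_digit hq1 ha) (summable_r hq1)

lemma piQ_shift (hq1 : 1 < q) (ha : IsDigitSeq a) (n : ℕ) :
    piQ q a = (∑ j ∈ Finset.range n, a j / q ^ (j + 1))
      + (1 / q ^ n) * piQ q (fun j => a (j + n)) := by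
  have hs := summable_digit hq1 ha
  have key : ∀ i : ℕ, a (i + n) / q ^ (i + n + 1)
      = (1 / q ^ n) * (a (i + n) / q ^ (i + 1)) := by
    intro i
    rw [show i + n + 1 = (i + 1) + n by omega, pow_add, div_mul_eq_div_div,
      one_div, inv_mul_eq_div]
  rw [piQ, ← Summable.sum_add_tsum_nat_add n hs]
  congr 1
  rw [piQ, ← tsum_mul_left]
  exact tsum_congr key

lemma piQ_complement (hq1 : 1 < q) (ha : IsDigitSeq a) :
    piQ q (fun j => 1 - a j) = 1 / (q - 1) - piQ q a := by
  have h1 := summable_digit hq1 ha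
  have h2 : Summable (fun j : ℕ => (1 / q) ^ (j + 1)) := summable_r hq1
  have key : ∀ j : ℕ, (1 - a j) / q ^ (j + 1)
      = (1 / q) ^ (j + 1) - a j / q ^ (j + 1) := by
    intro j
    rw [one_div_pow]
    ring
  rw [piQ, tsum_congr key, Summable.tsum_sub h2 h1, tsum_r hq1, piQ]

lemma isDigitSeq_shift (ha : IsDigitSeq a) (n : ℕ) :
    IsDigitSeq (fun j => a (j + n)) := fun j => ha (j + n)

lemma avoids01_shift {k : ℕ} (h : AvoidsWord01 k a) (n : ℕ) :
    AvoidsWord01 k (fun j => a (j + n)) := by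
  intro i hcon
  apply h (i + n)
  refine ⟨hcon.1, fun j hj1 hj2 => ?_⟩
  have := hcon.2 j hj1 hj2
  simpa [show i + j + n = i + n + j by omega] using this

lemma avoids10_shift {k : ℕ} (h : AvoidsWord10 k a) (n : ℕ) :
    AvoidsWord10 k (fun j => a (j + n)) := by
  intro i hcon
  apply h (i + n)
  refine ⟨hcon.1, fun j hj1 hj2 => ?_⟩
  have := hcon.2 j hj1 hj2
  simpa [show i + j + n = i + n + j by omega] using this

lemma isDigitSeq_compl (ha : IsDigitSeq a) : IsDigitSeq (fun j => 1 - a j) := by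
  intro j; rcases ha j with h | h <;> simp [h]

lemma avoids01_compl {k : ℕ} (ha : IsDigitSeq a) (h : AvoidsWord10 k a) :
    AvoidsWord01 k (fun j => 1 - a j) := by
  intro i hcon
  apply h i
  constructor
  · have := hcon.1; rcases ha i with h' | h' <;> simp [h'] at this ⊢
  · intro j hj1 hj2
    have := hcon.2 j hj1 hj2
    rcases ha (i + j) with h' | h' <;> simp [h'] at this ⊢

lemma key_ineq {k : ℕ} (hk : 2 ≤ k) {qk : ℝ} (hqk : IsBonacci k qk)
    (hq : qk < q) (hq2 : q < 2) :
    ∑ i ∈ Finset.range k, (1 / q) ^ (i + 1) < 1 := by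
  obtain ⟨⟨hqk1, hqk2⟩, hsum⟩ := hqk
  have hqk0 : (0:ℝ) < qk := by linarith
  have hpow : (0:ℝ) < qk ^ k := by positivity
  have h1 : ∑ i ∈ Finset.range k, (1 / qk) ^ (i + 1) = 1 := by
    have step : ∀ i ∈ Finset.range k, (1 / qk) ^ (i + 1) = qk ^ (k - 1 - i) / qk ^ k := by
      intro i hi
      rw [Finset.mem_range] at hi
      have h1 : qk ^ (i + 1) ≠ 0 := (pow_pos hqk0 _).ne'
      rw [one_div_pow, div_eq_div_iff h1 hpow.ne', one_mul, ← pow_add]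
      congr 1
      omega
    rw [Finset.sum_congr rfl step, ← Finset.sum_div, Finset.sum_range_reflect,
      ← hsum, div_self hpow.ne']
  have hlt : ∑ i ∈ Finset.range k, (1 / q) ^ (i + 1)
      < ∑ i ∈ Finset.range k, (1 / qk) ^ (i + 1) := by
    apply Finset.sum_lt_sum_of_nonempty
    · exact Finset.nonempty_range_iff.mpr (by omega)
    · intro i _
      have hq0 : (0:ℝ) < q := by linarith
      have h : 1 / q < 1 / qk := by
        rw [div_lt_div_iff₀ hq0 hqk0]
        linarith
      exact pow_lt_pow_left₀ h (by positivity) (Nat.succ_ne_zero i)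
  linarith

lemma tail_lt (hq1 : 1 < q) (hq2 : q < 2) {k : ℕ} (hk : 1 ≤ k)
    (hK : ∑ i ∈ Finset.range k, (1 / q) ^ (i + 1) < 1)
    (ha : IsDigitSeq a) (h01 : AvoidsWord01 k a) (h0 : a 0 = 0) :
    piQ q a < 1 / q := by
  have hq0 : (0:ℝ) < q := by linarith
  set r : ℝ := 1 / q with hr
  have hrpos : 0 < r := by positivity
  have hr1 : r < 1 := r_lt_one hq1
  -- step function
  have hstep : ∀ i, a i = 0 → ∃ j, 1 ≤ j ∧ j ≤ k ∧ a (i + j) = 0 := by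
    intro i hi
    have h := h01 i
    push_neg at h
    obtain ⟨j, hj1, hj2, hj3⟩ := h hi
    exact ⟨j, hj1, hj2, (ha (i + j)).resolve_right hj3⟩
  obtain ⟨s, hs⟩ : ∃ s : ℕ → ℕ, ∀ i, a i = 0 →
      1 ≤ s i ∧ s i ≤ k ∧ a (i + s i) = 0 := by
    refine ⟨fun i => if h : a i = 0 then (hstep i h).choose else 1, fun i h => ?_⟩
    simp only [dif_pos h]
    exact (hstep i h).choose_spec
  set n : ℕ → ℕ := fun i => Nat.rec 0 (fun _ m => m + s m) i with hn
  have hn0 : n 0 = 0 := rfl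
  have hnsucc : ∀ i, n (i + 1) = n i + s (n i) := fun i => rfl
  have hzero : ∀ i, a (n i) = 0 ∧ n i ≤ i * k := by
    intro i
    induction i with
    | zero => exact ⟨by rwa [hn0], by simp [hn0]⟩
    | succ i ih =>
      obtain ⟨hz, hle⟩ := ih
      obtain ⟨hs1, hs2, hs3⟩ := hs _ hz
      refine ⟨by rwa [hnsucc], ?_⟩
      rw [hnsucc]
      calc n i + s (n i) ≤ i * k + k := Nat.add_le_add hle hs2
        _ = (i + 1) * k := by ring
  have hmono : StrictMono n := by
    apply strictMono_nat_of_lt_succ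
    intro i
    have := (hs _ (hzero i).1).1
    rw [hnsucc]
    omega
  have hge : ∀ i, i ≤ n i := fun i => hmono.le_apply
  -- sums
  set g : ℕ → ℝ := fun c => (1 - a c) * r ^ (c + 1) with hg
  set f : ℕ → ℝ := fun i => r ^ (n i + 1) with hf
  have hgnn : ∀ c, 0 ≤ g c := by
    intro c
    apply mul_nonneg _ (by positivity)
    rcases ha c with h | h <;> simp [h]
  have hgle : ∀ c, g c ≤ r ^ (c + 1) := by
    intro c
    have h1 : 1 - a c ≤ 1 := by rcases ha c with h | h <;> simp [h]
    calc g c ≤ 1 * r ^ (c + 1) := mul_le_mul_of_nonneg_right h1 (by positivity)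
      _ = r ^ (c + 1) := one_mul _
  have hsumg : Summable g :=
    Summable.of_nonneg_of_le hgnn hgle (summable_r hq1)
  have hsumf : Summable f := by
    apply Summable.of_nonneg_of_le (fun i => by positivity)
      (fun i => ?_) (summable_r hq1)
    exact pow_le_pow_of_le_one hrpos.le hr1.le (by have := hge i; omega)
  have hA : ∑' i, f i ≤ ∑' c, g c := by
    apply Summable.tsum_le_tsum_of_inj n hmono.injective (fun c _ => hgnn c) _ hsumf hsumg
    intro i
    have : a (n i) = 0 := (hzero i).1
    simp [hf, hg, this]
  have hB : ∑' c, g c = 1 / (q - 1) - piQ q a := by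
    have key : ∀ c : ℕ, g c = (1 / q) ^ (c + 1) - a c / q ^ (c + 1) := by
      intro c
      simp only [hg, hr, one_div_pow]
      ring
    rw [tsum_congr key, Summable.tsum_sub (summable_r hq1) (summable_digit hq1 ha),
      tsum_r hq1, piQ]
  have hsml : Summable (fun i : ℕ => r ^ (i * k + 1)) := by
    apply Summable.of_nonneg_of_le (fun i => by positivity)
      (fun i => ?_) (summable_r hq1)
    apply pow_le_pow_of_le_one hrpos.le hr1.le
    have : i ≤ i * k := Nat.le_mul_of_pos_right i (by omega)
    omega
  have hC : ∑' i : ℕ, r ^ (i * k + 1) ≤ ∑' i, f i := by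
    apply Summable.tsum_le_tsum _ hsml hsumf
    intro i
    apply pow_le_pow_of_le_one hrpos.le hr1.le
    have := (hzero i).2
    omega
  have hrk1 : r ^ k < 1 := pow_lt_one₀ hrpos.le hr1 (by omega)
  have hrkpos : 0 < r ^ k := by positivity
  have hD : ∑' i : ℕ, r ^ (i * k + 1) = r / (1 - r ^ k) := by
    have key : ∀ i : ℕ, r ^ (i * k + 1) = (r ^ k) ^ i * r := by
      intro i
      rw [pow_succ, mul_comm i k, pow_mul]
    rw [tsum_congr key, tsum_mul_right,
      tsum_geometric_of_lt_one (by positivity) hrk1, inv_mul_eq_div]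
  have hbound : piQ q a ≤ 1 / (q - 1) - r / (1 - r ^ k) := by
    have := hA.trans_eq hB
    have := hC.trans hA
    linarith [hC.trans (hA.trans_eq hB), hD]
  -- final arithmetic
  have hgeom : ∑ i ∈ Finset.range k, r ^ (i + 1)
      = r * ((r ^ k - 1) / (r - 1)) := by
    rw [← geom_sum_eq hr1.ne k, Finset.mul_sum]
    exact Finset.sum_congr rfl fun i _ => by rw [pow_succ, mul_comm]
  have hkey : 2 * r - 1 < r * r ^ k := by
    have h2 : r * ((r ^ k - 1) / (r - 1)) = (r * r ^ k - r) / (r - 1) := by ring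
    rw [hgeom, h2, div_lt_iff_of_neg (by linarith : r - 1 < 0)] at hK
    linarith
  have hq1' : 1 / (q - 1) = r / (1 - r) := by
    rw [div_eq_div_iff (by linarith) (by linarith [hr1]), hr]
    field_simp
  have h1s : 0 < 1 - r ^ k := by linarith
  have h1r : 0 < 1 - r := by linarith
  have final : r / (1 - r) - r / (1 - r ^ k) < r := by
    rw [div_sub_div _ _ h1r.ne' h1s.ne', div_lt_iff₀ (by positivity)]
    nlinarith [mul_lt_mul_of_pos_left hkey hrpos]
  calc piQ q a ≤ 1 / (q - 1) - r / (1 - r ^ k) := hbound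
    _ = r / (1 - r) - r / (1 - r ^ k) := by rw [hq1']
    _ < r := final

lemma tail_gt (hq1 : 1 < q) (hq2 : q < 2) {k : ℕ} (hk : 1 ≤ k)
    (hK : ∑ i ∈ Finset.range k, (1 / q) ^ (i + 1) < 1)
    (ha : IsDigitSeq a) (h10 : AvoidsWord10 k a) (h1 : a 0 = 1) :
    1 / (q * (q - 1)) < piQ q a := by
  have hb : IsDigitSeq (fun j => 1 - a j) := isDigitSeq_compl ha
  have hb01 : AvoidsWord01 k (fun j => 1 - a j) := avoids01_compl ha h10
  have hb0 : (fun j => (1:ℝ) - a j) 0 = 0 := by simp [h1]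
  have hlt := tail_lt hq1 hq2 hk hK hb hb01 hb0
  rw [piQ_complement hq1 ha] at hlt
  have heq : 1 / (q * (q - 1)) = 1 / (q - 1) - 1 / q := by
    have hq0 : q ≠ 0 := by linarith
    have hq1' : q - 1 ≠ 0 := by intro h; linarith [sub_eq_zero.mp h]
    field_simp
    ring
  linarith [heq]

end Aux

theorem proj_Sk_subset_Uq
    (k : ℕ) (hk : 2 ≤ k) (qk : ℝ) (hqk : IsBonacci k qk)
    (q : ℝ) (hq : q ∈ Set.Ioo qk 2) :
    piQ q '' Sset k ⊆ Uq q := by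
  rintro x ⟨a, ⟨ha, h01, h10⟩, rfl⟩
  have hq1 : 1 < q := lt_trans hqk.1.1 hq.1
  have hq2 : q < 2 := hq.2
  have hK : ∑ i ∈ Finset.range k, (1 / q) ^ (i + 1) < 1 :=
    key_ineq hk hqk hq.1 hq.2
  have hk1 : 1 ≤ k := by omega
  have huniq : ∀ b, IsDigitSeq b → piQ q b = piQ q a → b = a := by
    intro b hb hba
    by_contra hne
    have hex : ∃ m, b m ≠ a m := Function.ne_iff.mp hne
    set n := Nat.find hex with hndef
    have hn : b n ≠ a n := Nat.find_spec hex
    have hlt : ∀ m < n, b m = a m := fun m hm => not_not.mp (Nat.find_min hex hm)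
    have hta := piQ_shift hq1 ha n
    have htb := piQ_shift hq1 hb n
    have hSeq : ∑ j ∈ Finset.range n, b j / q ^ (j + 1)
        = ∑ j ∈ Finset.range n, a j / q ^ (j + 1) := by
      apply Finset.sum_congr rfl
      intro j hj
      rw [Finset.mem_range] at hj
      rw [hlt j hj]
    have hpow : (1:ℝ) / q ^ n ≠ 0 := by positivity
    have htail : piQ q (fun j => b (j + n)) = piQ q (fun j => a (j + n)) := by
      have : (1 / q ^ n) * piQ q (fun j => b (j + n))
          = (1 / q ^ n) * piQ q (fun j => a (j + n)) := by
        have := hba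
        rw [hta, htb, hSeq] at this
        linarith
      exact mul_left_cancel₀ hpow this
    -- one-step expansions of the tails
    have hshifteq : ∀ c : ℕ → ℝ,
        (fun j => (fun i => c (i + n)) (j + 1)) = fun j => c (j + (n + 1)) := by
      intro c
      funext j
      show c (j + 1 + n) = c (j + (n + 1))
      congr 1
      omega
    have hexp : ∀ c : ℕ → ℝ, IsDigitSeq c →
        piQ q (fun j => c (j + n)) = c n / q + (1 / q) * piQ q (fun j => c (j + (n + 1))) := by
      intro c hc
      have := piQ_shift hq1 (isDigitSeq_shift hc n) 1
      rw [this, hshifteq c]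
      simp [Finset.sum_range_one]
    rcases ha n with han | han
    · -- a n = 0, so b n = 1
      have hbn : b n = 1 := (hb n).resolve_left (by rw [han] at hn; exact hn)
      have hlt1 : piQ q (fun j => a (j + n)) < 1 / q := by
        apply tail_lt hq1 hq2 hk1 hK (isDigitSeq_shift ha n) (avoids01_shift h01 n)
        simpa using han
      have hge1 : 1 / q ≤ piQ q (fun j => b (j + n)) := by
        rw [hexp b hb, hbn]
        have := piQ_nonneg hq1 (isDigitSeq_shift hb (n + 1))
        have hqpos : (0:ℝ) < 1 / q := by positivity
        nlinarith
      rw [htail] at hge1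
      linarith
    · -- a n = 1, so b n = 0
      have hbn : b n = 0 := (hb n).resolve_right (by rw [han] at hn; exact hn)
      have hgt1 : 1 / (q * (q - 1)) < piQ q (fun j => a (j + n)) := by
        apply tail_gt hq1 hq2 hk1 hK (isDigitSeq_shift ha n) (avoids10_shift h10 n)
        simpa using han
      have hle1 : piQ q (fun j => b (j + n)) ≤ 1 / (q * (q - 1)) := by
        rw [hexp b hb, hbn]
        have hple := piQ_le hq1 (isDigitSeq_shift hb (n + 1))
        have hqpos : (0:ℝ) < 1 / q := by positivity
        have : (1 / q) * piQ q (fun j => b (j + (n + 1)))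
            ≤ (1 / q) * (1 / (q - 1)) := by
          apply mul_le_mul_of_nonneg_left hple hqpos.le
        have heq : (1 / q) * (1 / (q - 1)) = 1 / (q * (q - 1)) := by
          rw [div_mul_div_comm, one_mul]
        simp only [zero_div, zero_add]
        linarith [heq]
      rw [htail] at hle1
      linarith
  constructor
  · exact ⟨piQ_nonneg hq1 ha, piQ_le hq1 ha⟩
  · rw [show (SigmaSet q (piQ q a)) = {a} from ?_, Set.encard_singleton]
    ext b
    simp only [SigmaSet, Set.mem_setOf_eq, Set.mem_singleton_iff]
    constructor
    · rintro ⟨hb, hb2⟩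
      exact huniq b hb hb2
    · rintro rfl
      exact ⟨ha, rfl⟩
end

section
/- Suppose A and B are compact subsets of ℝ and there exist points a_1, a_2 ∈ A and b_1, b_2 ∈ B with a_1 ≤ b_1 ≤ a_2 ≤ b_2. Then A and B are interleaved. Moreover, if min{b_1 − a_1, a_2 − b_1, b_2 − a_2} ≥ 2ε for some ε > 0, then A and B are ε-strongly interleaved. -/
open Set

/-! Gaps are intervals, so a point of `B` lying between two points of `A` keeps `A` out of every
gap of `B`; the chain `a₁ ≤ b₁ ≤ a₂ ≤ b₂` provides such a point in both directions. Moving each of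
the four points by at most `ε` into `A'` and `B'` preserves the chain when consecutive points are
`2ε` apart, and compactness of `A'`, `B'` is what makes the nearby points exist. -/

theorem not_containedInGap_of_le_of_le {A B : Set ℝ} {x y z : ℝ}
    (hx : x ∈ A) (hz : z ∈ A) (hy : y ∈ B) (hxy : x ≤ y) (hyz : y ≤ z) :
    ¬ContainedInGap A B := by
  rintro ⟨w, -, hA⟩
  have hy_gap : y ∈ connectedComponentIn Bᶜ w :=
    isPreconnected_connectedComponentIn.ordConnected.out (hA hx) (hA hz) ⟨hxy, hyz⟩
  exact connectedComponentIn_subset _ _ hy_gap hy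

theorem interleaved_of_le_of_le_of_le {A B : Set ℝ} {a₁ a₂ b₁ b₂ : ℝ}
    (ha₁ : a₁ ∈ A) (ha₂ : a₂ ∈ A) (hb₁ : b₁ ∈ B) (hb₂ : b₂ ∈ B)
    (h₁ : a₁ ≤ b₁) (h₂ : b₁ ≤ a₂) (h₃ : a₂ ≤ b₂) : Interleaved A B :=
  ⟨not_containedInGap_of_le_of_le hb₁ hb₂ ha₂ h₂ h₃,
    not_containedInGap_of_le_of_le ha₁ ha₂ hb₁ h₁ h₂⟩

theorem IsCompact.exists_dist_le_of_hausdorffEDist_le {α : Type*} [PseudoMetricSpace α]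
    {s t : Set α} (ht : IsCompact t) {ε : ℝ} (hε : 0 ≤ ε)
    (hst : Metric.hausdorffEDist s t ≤ ENNReal.ofReal ε) {x : α} (hx : x ∈ s) :
    ∃ y ∈ t, dist x y ≤ ε := by
  have hx_inf : Metric.infEDist x t ≤ ENNReal.ofReal ε :=
    (Metric.infEDist_le_hausdorffEDist_of_mem hx).trans hst
  have ht_ne : t.Nonempty :=
    Metric.nonempty_of_hausdorffEDist_ne_top ⟨x, hx⟩
      (ne_top_of_le_ne_top ENNReal.ofReal_ne_top hst)
  obtain ⟨y, hy, hxy⟩ := ht.exists_infEDist_eq_edist ht_ne x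
  rw [hxy, edist_dist, ENNReal.ofReal_le_ofReal_iff hε] at hx_inf
  exact ⟨y, hy, hx_inf⟩

theorem interleaving_of_separated_points_general
    (A B : Set ℝ)
    (a1 a2 b1 b2 : ℝ) (ha1 : a1 ∈ A) (ha2 : a2 ∈ A) (hb1 : b1 ∈ B) (hb2 : b2 ∈ B)
    (h1 : a1 ≤ b1) (h2 : b1 ≤ a2) (h3 : a2 ≤ b2) :
    Interleaved A B ∧
      ∀ ε : ℝ, 0 < ε → 2 * ε ≤ min (b1 - a1) (min (a2 - b1) (b2 - a2)) →
        StronglyInterleaved ε A B := by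
  refine ⟨interleaved_of_le_of_le_of_le ha1 ha2 hb1 hb2 h1 h2 h3, ?_⟩
  intro ε hε hsep A' B' hA' hB' hAA' hBB'
  obtain ⟨a1', ha1', d1⟩ := hA'.exists_dist_le_of_hausdorffEDist_le hε.le hAA' ha1
  obtain ⟨a2', ha2', d2⟩ := hA'.exists_dist_le_of_hausdorffEDist_le hε.le hAA' ha2
  obtain ⟨b1', hb1', d3⟩ := hB'.exists_dist_le_of_hausdorffEDist_le hε.le hBB' hb1
  obtain ⟨b2', hb2', d4⟩ := hB'.exists_dist_le_of_hausdorffEDist_le hε.le hBB' hb2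
  rw [Real.dist_eq, abs_le] at d1 d2 d3 d4
  simp only [le_min_iff] at hsep
  exact interleaved_of_le_of_le_of_le ha1' ha2' hb1' hb2' (by linarith) (by linarith) (by linarith)

theorem interleaving_of_separated_points
    (A B : Set ℝ) (hA : IsCompact A) (hB : IsCompact B)
    (a1 a2 b1 b2 : ℝ) (ha1 : a1 ∈ A) (ha2 : a2 ∈ A) (hb1 : b1 ∈ B) (hb2 : b2 ∈ B)
    (h1 : a1 ≤ b1) (h2 : b1 ≤ a2) (h3 : a2 ≤ b2) :
    Interleaved A B ∧
      ∀ ε : ℝ, 0 < ε → 2 * ε ≤ min (b1 - a1) (min (a2 - b1) (b2 - a2)) →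
        StronglyInterleaved ε A B :=
  interleaving_of_separated_points_general A B a1 a2 b1 b2 ha1 ha2 hb1 hb2 h1 h2 h3
end

section
/- Let k ≥ 2 be an integer, q ∈ (G, 2) where G = (1+√5)/2, and m ≥ 0 an integer. If x ∈ [0, 1/(q(q−1))] is such that f_0(x) = qx lies in N_k^m(q) = ⋂_{i=0}^m g_{q,k}^i(U_q + 1) ∩ g_{q,k}^m(U_q), then x ∈ U_q^{(m+2)} ∩ J_q (so x has exactly m+2 base q expansions), and hence q ∈ B_{m+2}. -/
/-!
Splitting on the first digit, `|Σ_q(x)| = |Σ_q(qx)| + |Σ_q(qx - 1)|`. For `q` above the golden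
ratio we have `1 + 1/q > 1/(q-1)`, so on `[1/q, ∞)` the branch `f_1^{-1}` only prepends a forced
digit `1` and preserves the number of expansions. Hence `|Σ_q(g_{q,k}(w))| = |Σ_q(w)| + |Σ_q(w-1)|`
for `w ≥ 1`. Every point of `N_k^{m+1}(q)` is the `g_{q,k}`-image of a point `u + 1` of
`N_k^m(q)` with `u ∈ U_q`, so by induction points of `N_k^m(q)` have `m + 1` expansions, and `x`
gets one more from the unique expansion of `qx - 1 ∈ U_q`.
-/

open Set

open Function

lemma hasSum_one_div_pow_succ {q : ℝ} (hq : 1 < q) :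
    HasSum (fun j : ℕ => 1 / q ^ (j + 1)) (1 / (q - 1)) := by
  have hq0 : 0 < q := one_pos.trans hq
  have hgeo := (hasSum_geometric_of_lt_one (inv_nonneg.2 hq0.le)
    (inv_lt_one_of_one_lt₀ hq)).mul_left q⁻¹
  have hterm : (fun j : ℕ => 1 / q ^ (j + 1)) = fun j => q⁻¹ * q⁻¹ ^ j := by
    funext j; rw [pow_succ', one_div, mul_inv, inv_pow]
  have hsum : 1 / (q - 1) = q⁻¹ * (1 - q⁻¹)⁻¹ := by
    have : q - 1 ≠ 0 := (sub_pos.2 hq).ne'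
    field_simp
  rwa [hterm, hsum]

def digitCons (ε : ℝ) (b : ℕ → ℝ) : ℕ → ℝ
  | 0 => ε
  | j + 1 => b j

lemma digitCons_head_tail (a : ℕ → ℝ) : digitCons (a 0) (fun j => a (j + 1)) = a := by
  funext j; cases j <;> rfl

lemma digitCons_injective (ε : ℝ) : Injective (digitCons ε) :=
  fun _ _ h => funext fun j => congrFun h (j + 1)

lemma isDigitSeq_digitCons_iff {ε : ℝ} {b : ℕ → ℝ} :
    IsDigitSeq (digitCons ε b) ↔ (ε = 0 ∨ ε = 1) ∧ IsDigitSeq b :=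
  ⟨fun h => ⟨h 0, fun j => h (j + 1)⟩, fun ⟨hε, hb⟩ j => by cases j; exacts [hε, hb _]⟩

lemma piQ_digitCons {q : ℝ} (ε : ℝ) {b : ℕ → ℝ} (hb : Summable fun j => b j / q ^ (j + 1)) :
    piQ q (digitCons ε b) = (ε + piQ q b) / q := by
  have htail : (fun j => digitCons ε b (j + 1) / q ^ (j + 1 + 1)) =
      fun j => b j / q ^ (j + 1) / q := by
    funext j; rw [pow_succ, div_div]; rfl
  have hs : Summable fun j => digitCons ε b (j + 1) / q ^ (j + 1 + 1) := by
    rw [htail]; exact hb.div_const q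
  rw [piQ, tsum_eq_zero_add' (f := fun j => digitCons ε b j / q ^ (j + 1)) hs, htail,
    tsum_div_const, piQ, add_div, zero_add, pow_one]
  rfl

namespace IsDigitSeq

variable {a : ℕ → ℝ} {q : ℝ}

lemma nonneg (ha : IsDigitSeq a) (j : ℕ) : 0 ≤ a j := by
  rcases ha j with h | h <;> simp [h]

lemma le_one (ha : IsDigitSeq a) (j : ℕ) : a j ≤ 1 := by
  rcases ha j with h | h <;> simp [h]

lemma summable_piQ (hq : 1 < q) (ha : IsDigitSeq a) :
    Summable (fun j => a j / q ^ (j + 1)) :=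
  (hasSum_one_div_pow_succ hq).summable.of_nonneg_of_le
    (fun j => div_nonneg (ha.nonneg j) (by positivity))
    (fun j => div_le_div_of_nonneg_right (ha.le_one j) (by positivity))

lemma piQ_mem_Iq (hq : 1 < q) (ha : IsDigitSeq a) : piQ q a ∈ Iq q :=
  ⟨tsum_nonneg fun j => div_nonneg (ha.nonneg j) (by positivity),
    hasSum_le (fun j => div_le_div_of_nonneg_right (ha.le_one j) (by positivity))
      (ha.summable_piQ hq).hasSum (hasSum_one_div_pow_succ hq)⟩

end IsDigitSeq

section Expansions

variable {q : ℝ}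

lemma mem_Iq_of_mem_sigmaSet (hq : 1 < q) {x : ℝ} {a : ℕ → ℝ} (ha : a ∈ SigmaSet q x) :
    x ∈ Iq q :=
  ha.2 ▸ ha.1.piQ_mem_Iq hq

lemma sigmaSet_eq_empty_of_notMem_Iq (hq : 1 < q) {x : ℝ} (hx : x ∉ Iq q) :
    SigmaSet q x = ∅ :=
  Set.eq_empty_of_forall_notMem fun _ ha => hx (mem_Iq_of_mem_sigmaSet hq ha)

lemma digitCons_mem_sigmaSet_iff (hq : 1 < q) {ε x : ℝ} (hε : ε = 0 ∨ ε = 1) {b : ℕ → ℝ} :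
    digitCons ε b ∈ SigmaSet q x ↔ b ∈ SigmaSet q (q * x - ε) := by
  have hq0 : q ≠ 0 := (one_pos.trans hq).ne'
  simp only [SigmaSet, Set.mem_ofPred_eq, isDigitSeq_digitCons_iff, hε, true_and]
  refine and_congr_right fun hb => ?_
  rw [piQ_digitCons ε (hb.summable_piQ hq), div_eq_iff hq0]
  constructor <;> intro h <;> linarith

lemma sigmaSet_eq_union (hq : 1 < q) (x : ℝ) :
    SigmaSet q x =
      digitCons 0 '' SigmaSet q (q * x) ∪ digitCons 1 '' SigmaSet q (q * x - 1) := by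
  refine Set.Subset.antisymm (fun a ha => ?_) (Set.union_subset ?_ ?_)
  · have hdigit := ha.1 0
    rw [← digitCons_head_tail a] at ha ⊢
    rcases hdigit with h | h <;> rw [h] at ha ⊢
    · exact Or.inl ⟨_, by rwa [digitCons_mem_sigmaSet_iff hq (Or.inl rfl), sub_zero] at ha, rfl⟩
    · exact Or.inr ⟨_, (digitCons_mem_sigmaSet_iff hq (Or.inr rfl)).1 ha, rfl⟩
  · rintro _ ⟨b, hb, rfl⟩
    rwa [digitCons_mem_sigmaSet_iff hq (Or.inl rfl), sub_zero]
  · rintro _ ⟨b, hb, rfl⟩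
    exact (digitCons_mem_sigmaSet_iff hq (Or.inr rfl)).2 hb

lemma encard_sigmaSet_eq_add (hq : 1 < q) (x : ℝ) :
    (SigmaSet q x).encard = (SigmaSet q (q * x)).encard + (SigmaSet q (q * x - 1)).encard := by
  have hdisj : Disjoint (digitCons 0 '' SigmaSet q (q * x))
      (digitCons 1 '' SigmaSet q (q * x - 1)) :=
    Set.disjoint_left.2 fun _ ⟨_, _, hb⟩ ⟨_, _, hc⟩ => zero_ne_one (congrFun (hb.trans hc.symm) 0)
  rw [sigmaSet_eq_union hq, Set.encard_union_eq hdisj, (digitCons_injective 0).encard_image,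
    (digitCons_injective 1).encard_image]

end Expansions

lemma Function.Injective.mem_image_iterate_succ_iff {α : Type*} {f : α → α} (hf : Injective f)
    {s : Set α} {a : α} (n : ℕ) : f a ∈ f^[n + 1] '' s ↔ a ∈ f^[n] '' s := by
  rw [iterate_succ', Set.image_comp, hf.mem_set_image]

open scoped goldenRatio

section GoldenRange

variable {q : ℝ}

lemma one_div_sub_one_lt_one_add_one_div (hq : φ < q) : 1 / (q - 1) < 1 + 1 / q := by
  have hq1 : 1 < q := Real.one_lt_goldenRatio.trans hq
  have hsq : 1 < q * (q - 1) := by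
    nlinarith [Real.goldenRatio_sq, Real.one_lt_goldenRatio]
  have hq0 : q ≠ 0 := by positivity
  have hq1' : q - 1 ≠ 0 := by linarith
  have hdiff : 1 + 1 / q - 1 / (q - 1) = (q * (q - 1) - 1) / (q * (q - 1)) := by
    field_simp; ring
  have hpos : 0 < (q * (q - 1) - 1) / (q * (q - 1)) := div_pos (by linarith) (by linarith)
  linarith

/-- Above the switch region the first digit is forced to be `1`, since `1 + 1/q > 1/(q-1)`. -/
lemma encard_sigmaSet_add_one_div (hq : φ < q) {t : ℝ} (ht : 1 / q ≤ t) :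
    (SigmaSet q ((t + 1) / q)).encard = (SigmaSet q t).encard := by
  have hq0 : q ≠ 0 := (Real.goldenRatio_pos.trans hq).ne'
  have hout : t + 1 ∉ Iq q := fun h => by
    linarith [h.2, one_div_sub_one_lt_one_add_one_div hq]
  rw [encard_sigmaSet_eq_add (Real.one_lt_goldenRatio.trans hq), mul_div_cancel₀ _ hq0,
    sigmaSet_eq_empty_of_notMem_Iq (Real.one_lt_goldenRatio.trans hq) hout, add_sub_cancel_right,
    Set.encard_empty, zero_add]

lemma encard_sigmaSet_iterate_add_one_div (hq : φ < q) {t : ℝ} (ht : 1 / q ≤ t) (n : ℕ) :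
    (SigmaSet q ((fun y => (y + 1) / q)^[n] t)).encard = (SigmaSet q t).encard := by
  induction n generalizing t with
  | zero => rfl
  | succ n ih =>
    have hq0 : 0 < q := Real.goldenRatio_pos.trans hq
    have ht' : 1 / q ≤ (t + 1) / q :=
      div_le_div_of_nonneg_right (by linarith [one_div_pos.2 hq0]) hq0.le
    rw [iterate_succ_apply, ih ht', encard_sigmaSet_add_one_div hq ht]

lemma encard_sigmaSet_gMap (hq : φ < q) (k : ℕ) {w : ℝ} (hw : 1 ≤ w) :
    (SigmaSet q (gMap q k w)).encard = (SigmaSet q w).encard + (SigmaSet q (w - 1)).encard := by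
  have hq0 : 0 < q := Real.goldenRatio_pos.trans hq
  rw [gMap, encard_sigmaSet_iterate_add_one_div hq (div_le_div_of_nonneg_right hw hq0.le),
    encard_sigmaSet_eq_add (Real.one_lt_goldenRatio.trans hq), mul_div_cancel₀ _ hq0.ne']

end GoldenRange

lemma gMap_strictMono {q : ℝ} (hq : 0 < q) (k : ℕ) : StrictMono (gMap q k) :=
  have hstep : StrictMono fun y : ℝ => (y + 1) / q := fun _ _ h => by dsimp only; gcongr
  (hstep.iterate (k - 1)).comp fun _ _ h => by gcongr

/-- The paper's `N_k^m(q)`. -/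
def NSet (q : ℝ) (k m : ℕ) : Set ℝ :=
  (⋂ i ∈ Finset.Icc 0 m, (gMap q k)^[i] '' ((fun u => u + 1) '' Uq q)) ∩ (gMap q k)^[m] '' Uq q

lemma NSet_subset_image_add_one (q : ℝ) (k m : ℕ) : NSet q k m ⊆ (fun u => u + 1) '' Uq q :=
  fun _ hw => by simpa using Set.mem_iInter₂.1 hw.1 0 (by simp)

lemma exists_mem_NSet_of_mem_NSet_succ {q : ℝ} (hq : 0 < q) {k m : ℕ} {w : ℝ}
    (hw : w ∈ NSet q k (m + 1)) : ∃ v ∈ NSet q k m, gMap q k v = w := by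
  have hinj := (gMap_strictMono hq k).injective
  obtain ⟨hcap, hlast⟩ := hw
  rw [iterate_succ', Set.image_comp] at hlast
  obtain ⟨v, hv, rfl⟩ := hlast
  refine ⟨v, ⟨Set.mem_iInter₂.2 fun i hi => ?_, hv⟩, rfl⟩
  rw [← hinj.mem_image_iterate_succ_iff]
  exact Set.mem_iInter₂.1 hcap (i + 1) (by simp only [Finset.mem_Icc] at hi ⊢; omega)

lemma encard_sigmaSet_of_mem_NSet {q : ℝ} (hq : φ < q) (k : ℕ) :
    ∀ m : ℕ, ∀ w ∈ NSet q k m, (SigmaSet q w).encard = m + 1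
  | 0, w, hw => by
    obtain ⟨u, hu, rfl⟩ := hw.2
    rw [iterate_zero_apply, hu.2]; rfl
  | m + 1, w, hw => by
    obtain ⟨v, hv, rfl⟩ := exists_mem_NSet_of_mem_NSet_succ (Real.goldenRatio_pos.trans hq) hw
    obtain ⟨u, hu, rfl⟩ := NSet_subset_image_add_one q k m hv
    rw [encard_sigmaSet_gMap hq k (by linarith [hu.1.1]), encard_sigmaSet_of_mem_NSet hq k m _ hv,
      add_sub_cancel_right, hu.2]
    push_cast; ring

theorem intersection_gives_nonempty_B_general
    (k : ℕ) (q : ℝ) (hq : q ∈ Set.Ioo ((1 + Real.sqrt 5) / 2) 2)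
    (m : ℕ) (x : ℝ) (hx : x ∈ Set.Icc (0 : ℝ) (1 / (q * (q - 1))))
    (hfx : q * x ∈ (⋂ i ∈ Finset.Icc 0 m, (gMap q k)^[i] '' ((fun u => u + 1) '' Uq q)) ∩
        ((gMap q k)^[m] '' Uq q)) :
    x ∈ UqM q ((m : ℕ∞) + 2) ∩ Jq q ∧ q ∈ Bset ((m : ℕ∞) + 2) := by
  have hφq : φ < q := hq.1
  have hq1 : 1 < q := Real.one_lt_goldenRatio.trans hφq
  have hN : q * x ∈ NSet q k m := hfx
  obtain ⟨u, hu, hux⟩ := NSet_subset_image_add_one q k m hN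
  have hcard : (SigmaSet q x).encard = m + 2 := by
    rw [encard_sigmaSet_eq_add hq1, encard_sigmaSet_of_mem_NSet hφq k m _ hN, ← hux,
      add_sub_cancel_right, hu.2, add_assoc]
    rfl
  obtain ⟨a, ha⟩ : (SigmaSet q x).Nonempty := Set.nonempty_of_encard_ne_zero (by simp [hcard])
  have hxU : x ∈ UqM q (m + 2) := ⟨mem_Iq_of_mem_sigmaSet hq1 ha, hcard⟩
  have hxJ : x ∈ Jq q :=
    ⟨(div_le_iff₀' (by linarith)).2 (by linarith [hu.1.1]), hx.2⟩
  exact ⟨⟨hxU, hxJ⟩, ⟨hq1, hq.2⟩, x, hxU⟩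

theorem intersection_gives_nonempty_B
    (k : ℕ) (hk : 2 ≤ k) (q : ℝ) (hq : q ∈ Set.Ioo ((1 + Real.sqrt 5) / 2) 2)
    (m : ℕ) (x : ℝ) (hx : x ∈ Set.Icc (0 : ℝ) (1 / (q * (q - 1))))
    (hfx : q * x ∈ (⋂ i ∈ Finset.Icc 0 m, (gMap q k)^[i] '' ((fun u => u + 1) '' Uq q)) ∩
        ((gMap q k)^[m] '' Uq q)) :
    x ∈ UqM q ((m : ℕ∞) + 2) ∩ Jq q ∧ q ∈ Bset ((m : ℕ∞) + 2) :=
  intersection_gives_nonempty_B_general k q hq m x hx hfx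
end

section
/- Let q ∈ (1,2) and suppose x ∈ I_q ∖ J_q maps uniquely to y ∈ I_q, i.e. there is a finite word ε_1⋯ε_m ∈ {0,1}^* with f_{ε_m} ∘ ⋯ ∘ f_{ε_1}(x) = y such that f_{ε_k} ∘ ⋯ ∘ f_{ε_1}(x) ∈ I_q ∖ J_q for all 1 ≤ k ≤ m−1. Then x and y have the same number of base q expansions: |Σ_q(x)| = |Σ_q(y)|. -/
open Set

/-! Outside `J_q` at most one of `f_0(x)`, `f_1(x)` lies in `I_q`, while the tail of any expansion
of `x` with first digit `d` is an expansion of `f_d(x) ∈ I_q`. So the first digit of every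
expansion of `x` is the digit of the branch taken, and dropping it is a bijection
`Σ_q(x) ≃ Σ_q(f_d(x))`; composing these along the orbit gives `Σ_q(x) ≃ Σ_q(y)`. -/

section DigitSeq

variable {a : ℕ → ℝ}

lemma IsDigitSeq.nonneg_s7 (ha : IsDigitSeq a) (j : ℕ) : 0 ≤ a j := by
  rcases ha j with h | h <;> simp [h]

lemma IsDigitSeq.le_one_s7 (ha : IsDigitSeq a) (j : ℕ) : a j ≤ 1 := by
  rcases ha j with h | h <;> simp [h]

lemma IsDigitSeq.tail (ha : IsDigitSeq a) : IsDigitSeq fun j => a (j + 1) :=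
  fun j => ha (j + 1)

lemma IsDigitSeq.cons {d : ℝ} (hd : d = 0 ∨ d = 1) (ha : IsDigitSeq a) :
    IsDigitSeq fun | 0 => d | j + 1 => a j
  | 0 => hd
  | j + 1 => ha j

end DigitSeq

section Projection

variable {q : ℝ} {a : ℕ → ℝ}

lemma IsDigitSeq.div_pow_le (hq : 0 < q) (ha : IsDigitSeq a) (j : ℕ) :
    a j / q ^ (j + 1) ≤ q⁻¹ ^ (j + 1) := by
  rw [inv_pow, ← one_div]
  gcongr
  exact ha.le_one_s7 j

lemma summable_inv_pow_succ (hq : 1 < q) : Summable fun j : ℕ => q⁻¹ ^ (j + 1) :=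
  (summable_nat_add_iff 1).mpr <|
    summable_geometric_of_lt_one (by positivity) (inv_lt_one_of_one_lt₀ hq)

lemma tsum_inv_pow_succ (hq : 1 < q) : ∑' j : ℕ, q⁻¹ ^ (j + 1) = 1 / (q - 1) := by
  simp_rw [pow_succ, tsum_mul_right,
    tsum_geometric_of_lt_one (by positivity) (inv_lt_one_of_one_lt₀ hq)]
  have hq₁ : q - 1 ≠ 0 := by linarith
  field_simp

lemma IsDigitSeq.summable_piQ_s7 (hq : 1 < q) (ha : IsDigitSeq a) :
    Summable fun j => a j / q ^ (j + 1) :=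
  (summable_inv_pow_succ hq).of_nonneg_of_le
    (fun j => div_nonneg (ha.nonneg_s7 j) (by positivity)) (ha.div_pow_le (by positivity))

lemma IsDigitSeq.piQ_mem_Iq_s7 (hq : 1 < q) (ha : IsDigitSeq a) : piQ q a ∈ Iq q := by
  refine ⟨tsum_nonneg fun j => div_nonneg (ha.nonneg_s7 j) (by positivity), ?_⟩
  rw [← tsum_inv_pow_succ hq]
  exact (ha.summable_piQ_s7 hq).tsum_le_tsum (ha.div_pow_le (by positivity))
    (summable_inv_pow_succ hq)

lemma IsDigitSeq.piQ_eq_head_add_tail (hq : 1 < q) (ha : IsDigitSeq a) :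
    piQ q a = (a 0 + piQ q fun j => a (j + 1)) / q := by
  rw [piQ, (ha.summable_piQ_s7 hq).tsum_eq_zero_add, piQ, add_div, ← tsum_div_const]
  simp_rw [div_div, ← pow_succ, zero_add, pow_one]

end Projection

section Dynamics

variable {q x : ℝ}

lemma fDigit_eq (q : ℝ) (b : Bool) (x : ℝ) : fDigit q b x = q * x - b.toNat := by
  cases b <;> simp [fDigit]

lemma mem_Jq_of_mul_mem_Iq_of_mul_sub_one_mem_Iq (hq : 1 < q) (h₀ : q * x ∈ Iq q)
    (h₁ : q * x - 1 ∈ Iq q) : x ∈ Jq q := by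
  have hq₀ : 0 < q := by linarith
  have hq₁ : 0 < q - 1 := by linarith
  obtain ⟨-, hle⟩ := h₀
  obtain ⟨hge, -⟩ := h₁
  rw [le_div_iff₀ hq₁] at hle
  constructor
  · rw [div_le_iff₀ hq₀]; linarith
  · rw [le_div_iff₀ (by positivity)]; linarith

lemma eq_of_sub_mem_Iq (hq : 1 < q) (hx : x ∉ Jq q) {d d' : ℝ} (hd : d = 0 ∨ d = 1)
    (hd' : d' = 0 ∨ d' = 1) (h : q * x - d ∈ Iq q) (h' : q * x - d' ∈ Iq q) : d = d' := by
  rcases hd with rfl | rfl <;> rcases hd' with rfl | rfl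
  · rfl
  · exact absurd (mem_Jq_of_mul_mem_Iq_of_mul_sub_one_mem_Iq hq (by simpa using h) h') hx
  · exact absurd (mem_Jq_of_mul_mem_Iq_of_mul_sub_one_mem_Iq hq (by simpa using h') h) hx
  · rfl

lemma SigmaSet.head_eq (hq : 1 < q) (hx : x ∉ Jq q) {d : ℝ} (hd : d = 0 ∨ d = 1)
    (hdx : q * x - d ∈ Iq q) {a : ℕ → ℝ} (ha : a ∈ SigmaSet q x) : a 0 = d := by
  obtain ⟨ha, rfl⟩ := ha
  refine eq_of_sub_mem_Iq hq hx (ha 0) hd ?_ hdx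
  have hq₀ : q ≠ 0 := by linarith
  rw [ha.piQ_eq_head_add_tail hq, mul_div_cancel₀ _ hq₀, add_sub_cancel_left]
  exact ha.tail.piQ_mem_Iq_s7 hq

def SigmaSet.tailEquiv (hq : 1 < q) {d : ℝ} (hd : d = 0 ∨ d = 1)
    (hhead : ∀ a ∈ SigmaSet q x, a 0 = d) : SigmaSet q x ≃ SigmaSet q (q * x - d) where
  toFun a := ⟨fun j => a.1 (j + 1), a.2.1.tail, by
    have h := a.2.1.piQ_eq_head_add_tail hq
    rw [a.2.2, hhead a.1 a.2, eq_div_iff (by linarith)] at h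
    linarith⟩
  invFun a := ⟨fun | 0 => d | j + 1 => a.1 j, a.2.1.cons hd, by
    have h := (a.2.1.cons hd).piQ_eq_head_add_tail hq
    rw [h]
    simp only [a.2.2]
    field_simp
    ring⟩
  left_inv a := by
    ext (_ | j)
    · exact (hhead a.1 a.2).symm
    · rfl
  right_inv _ := rfl

theorem nonempty_equiv_SigmaSet_fDigit (hq : 1 < q) (hx : x ∉ Jq q) {b : Bool}
    (hb : fDigit q b x ∈ Iq q) : Nonempty (SigmaSet q x ≃ SigmaSet q (fDigit q b x)) := by
  have hd : (b.toNat : ℝ) = 0 ∨ (b.toNat : ℝ) = 1 := by cases b <;> simp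
  rw [fDigit_eq] at hb ⊢
  exact ⟨SigmaSet.tailEquiv hq hd fun _ => SigmaSet.head_eq hq hx hd hb⟩

theorem nonempty_equiv_SigmaSet_of_orbit (hq : 1 < q) (w : ℕ → Bool) (o : ℕ → ℝ) (m : ℕ)
    (hstep : ∀ j < m, o (j + 1) = fDigit q (w j) (o j)) (hI : ∀ j < m, o (j + 1) ∈ Iq q)
    (hJ : ∀ j < m, o j ∉ Jq q) : Nonempty (SigmaSet q (o 0) ≃ SigmaSet q (o m)) := by
  induction m with
  | zero => exact ⟨Equiv.refl _⟩
  | succ m ih =>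
    obtain ⟨e⟩ := ih (fun j hj => hstep j (by omega)) (fun j hj => hI j (by omega))
      (fun j hj => hJ j (by omega))
    have hnext := hI m m.lt_succ_self
    rw [hstep m m.lt_succ_self] at hnext ⊢
    obtain ⟨e'⟩ := nonempty_equiv_SigmaSet_fDigit hq (hJ m m.lt_succ_self) hnext
    exact ⟨e.trans e'⟩

end Dynamics

theorem maps_uniquely_to_preserves_card
    (q : ℝ) (hq : q ∈ Set.Ioo (1 : ℝ) 2) (x y : ℝ) (m : ℕ)
    (w : ℕ → Bool) (o : ℕ → ℝ)
    (ho0 : o 0 = x) (hstep : ∀ j < m, o (j + 1) = fDigit q (w j) (o j)) (hom : o m = y)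
    (hx : x ∈ Iq q \ Jq q) (hy : y ∈ Iq q)
    (hmid : ∀ j, 1 ≤ j → j ≤ m - 1 → o j ∈ Iq q \ Jq q) :
    Nonempty (↥(SigmaSet q x) ≃ ↥(SigmaSet q y)) := by
  subst ho0 hom
  refine nonempty_equiv_SigmaSet_of_orbit hq.1 w o m hstep (fun j hj => ?_) (fun j hj => ?_)
  · rcases Nat.lt_or_ge (j + 1) m with h | h
    · exact (hmid (j + 1) (by omega) (by omega)).1
    · rwa [show j + 1 = m by omega]
  · rcases Nat.eq_zero_or_pos j with rfl | h
    · exact hx.2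
    · exact (hmid j h (by omega)).2
end

section
/- Let C ⊂ ℝ be a compact set, let G = (a, b) be a bounded gap of C, and suppose that every bounded gap of C contained in the interval [min C, a] has diameter at most |G| (equivalently, [min C, a] is a bridge of C). Then the compact set C ∩ [min C, a] has thickness at least τ(C). Symmetrically, if every bounded gap of C contained in [b, max C] has diameter at most |G|, then τ(C ∩ [b, max C]) ≥ τ(C). -/
open Set

theorem thickness_of_bridge_subset
    (C : Set ℝ) (hC : IsCompact C) (a b : ℝ) (hab : IsGap C a b) :
    ((∀ c d, IsGap C c d → d ≤ a → d - c ≤ b - a) →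
      thickness C ≤ thickness (C ∩ Set.Icc (sInf C) a)) ∧
    ((∀ c d, IsGap C c d → b ≤ c → d - c ≤ b - a) →
      thickness C ≤ thickness (C ∩ Set.Icc b (sSup C))) := by
  obtain ⟨hlt, haC, hbC, hIoo⟩ := hab
  have hne : C.Nonempty := ⟨a, haC⟩
  have hbdb : BddBelow C := hC.bddBelow
  have hbda : BddAbove C := hC.bddAbove
  have hInfC : sInf C ∈ C := hC.sInf_mem hne
  have hSupC : sSup C ∈ C := hC.sSup_mem hne
  have hIa : sInf C ≤ a := csInf_le hbdb haC
  have hbS : b ≤ sSup C := le_csSup hbda hbC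
  constructor
  · -- left bridge
    intro hyp
    set C' := C ∩ Set.Icc (sInf C) a with hC'def
    have hmem : ∀ x, x ∈ C → x ≤ a → x ∈ C' := fun x hx hxa => ⟨hx, csInf_le hbdb hx, hxa⟩
    have haC' : a ∈ C' := hmem a haC le_rfl
    have hbdb' : BddBelow C' := hbdb.mono Set.inter_subset_left
    have hbda' : BddAbove C' := ⟨a, fun x hx => hx.2.2⟩
    have hsInf' : sInf C' = sInf C := le_antisymm (csInf_le hbdb' (hmem _ hInfC hIa))
      (le_csInf ⟨a, haC'⟩ fun x hx => csInf_le hbdb hx.1)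
    have hsSup' : sSup C' = a := le_antisymm (csSup_le ⟨a, haC'⟩ fun x hx => hx.2.2)
      (le_csSup hbda' haC')
    have gap_of' : ∀ c d, IsGap C' c d → IsGap C c d ∧ d ≤ a := by
      rintro c d ⟨h1, hc, hd, hE⟩
      refine ⟨⟨h1, hc.1, hd.1, ?_⟩, hd.2.2⟩
      ext x
      simp only [Set.mem_inter_iff, Set.mem_Ioo, Set.mem_empty_iff_false, iff_false, not_and]
      rintro ⟨hx1, hx2⟩ hxC
      have hx' : x ∈ Set.Ioo c d ∩ C' :=
        ⟨⟨hx1, hx2⟩, hxC, le_trans hc.2.1 hx1.le, le_trans hx2.le hd.2.2⟩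
      rw [hE] at hx'
      exact hx'
    unfold thickness
    refine le_iInf ?_
    rintro ⟨⟨c, d⟩, hg⟩
    obtain ⟨hgC, hda⟩ := gap_of' c d hg
    have hcd : c < d := hgC.1
    have hdc : (0 : ℝ) < d - c := sub_pos.mpr hcd
    have hca : c ≤ a := le_trans hcd.le hda
    have hcC : c ∈ C := hgC.2.1
    have hdC : d ∈ C := hgC.2.2.1
    -- bound for left bridge sets
    have hbddL : BddAbove ({sInf C} ∪ {d' | ∃ c', IsGap C c' d' ∧ d' ≤ c ∧ d - c ≤ d' - c'}) := by
      refine ⟨c, ?_⟩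
      rintro x hx
      simp only [Set.mem_union, Set.mem_singleton_iff, Set.mem_setOf_eq] at hx
      rcases hx with rfl | ⟨c', _, hxc, _⟩
      · exact csInf_le hbdb hcC
      · exact hxc
    have hL : leftBridgeStart C' c d ≤ leftBridgeStart C c d := by
      unfold leftBridgeStart
      refine csSup_le ⟨sInf C', Set.mem_union_left _ rfl⟩ ?_
      intro x hx
      simp only [Set.mem_union, Set.mem_singleton_iff, Set.mem_setOf_eq] at hx
      rcases hx with rfl | ⟨c', hg', hxc, hlen⟩
      · rw [hsInf']
        exact le_csSup hbddL (Set.mem_union_left _ rfl)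
      · exact le_csSup hbddL (Set.mem_union_right _ ⟨c', (gap_of' c' x hg').1, hxc, hlen⟩)
    -- bound for right bridge sets
    have hbddR : BddBelow ({sSup C} ∪ {c' | ∃ d', IsGap C c' d' ∧ d ≤ c' ∧ d - c ≤ d' - c'}) := by
      refine ⟨d, ?_⟩
      rintro x hx
      simp only [Set.mem_union, Set.mem_singleton_iff, Set.mem_setOf_eq] at hx
      rcases hx with rfl | ⟨d', _, hdx, _⟩
      · exact le_csSup hbda hdC
      · exact hdx
    have haS : a ∈ {c' | ∃ d', IsGap C c' d' ∧ d ≤ c' ∧ d - c ≤ d' - c'} :=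
      ⟨b, ⟨hlt, haC, hbC, hIoo⟩, hda, hyp c d hgC hda⟩
    have hR : rightBridgeEnd C c d ≤ rightBridgeEnd C' c d := by
      unfold rightBridgeEnd
      refine le_csInf ⟨sSup C', Set.mem_union_left _ rfl⟩ ?_
      intro x hx
      simp only [Set.mem_union, Set.mem_singleton_iff, Set.mem_setOf_eq] at hx
      rcases hx with rfl | ⟨d', hg', hdx, hlen⟩
      · rw [hsSup']
        exact csInf_le hbddR (Set.mem_union_right _ haS)
      · exact csInf_le hbddR (Set.mem_union_right _ ⟨d', (gap_of' x d' hg').1, hdx, hlen⟩)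
    refine iInf_le_of_le ⟨(c, d), hgC⟩ (ENNReal.ofReal_le_ofReal ?_)
    refine min_le_min ?_ ?_
    · exact div_le_div_of_nonneg_right (by linarith) hdc.le
    · exact div_le_div_of_nonneg_right (by linarith) hdc.le
  · -- right bridge
    intro hyp
    set C' := C ∩ Set.Icc b (sSup C) with hC'def
    have hmem : ∀ x, x ∈ C → b ≤ x → x ∈ C' := fun x hx hbx => ⟨hx, hbx, le_csSup hbda hx⟩
    have hbC' : b ∈ C' := hmem b hbC le_rfl
    have hbdb' : BddBelow C' := ⟨b, fun x hx => hx.2.1⟩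
    have hbda' : BddAbove C' := hbda.mono Set.inter_subset_left
    have hsInf' : sInf C' = b := le_antisymm (csInf_le hbdb' hbC')
      (le_csInf ⟨b, hbC'⟩ fun x hx => hx.2.1)
    have hsSup' : sSup C' = sSup C := le_antisymm (csSup_le ⟨b, hbC'⟩ fun x hx => hx.2.2)
      (le_csSup hbda' (hmem _ hSupC hbS))
    have gap_of' : ∀ c d, IsGap C' c d → IsGap C c d ∧ b ≤ c := by
      rintro c d ⟨h1, hc, hd, hE⟩
      refine ⟨⟨h1, hc.1, hd.1, ?_⟩, hc.2.1⟩
      ext x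
      simp only [Set.mem_inter_iff, Set.mem_Ioo, Set.mem_empty_iff_false, iff_false, not_and]
      rintro ⟨hx1, hx2⟩ hxC
      have hx' : x ∈ Set.Ioo c d ∩ C' :=
        ⟨⟨hx1, hx2⟩, hxC, le_trans hc.2.1 hx1.le, le_csSup hbda hxC⟩
      rw [hE] at hx'
      exact hx'
    unfold thickness
    refine le_iInf ?_
    rintro ⟨⟨c, d⟩, hg⟩
    obtain ⟨hgC, hbc⟩ := gap_of' c d hg
    have hcd : c < d := hgC.1
    have hdc : (0 : ℝ) < d - c := sub_pos.mpr hcd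
    have hcC : c ∈ C := hgC.2.1
    have hdC : d ∈ C := hgC.2.2.1
    have hbddL : BddAbove ({sInf C} ∪ {d' | ∃ c', IsGap C c' d' ∧ d' ≤ c ∧ d - c ≤ d' - c'}) := by
      refine ⟨c, ?_⟩
      rintro x hx
      simp only [Set.mem_union, Set.mem_singleton_iff, Set.mem_setOf_eq] at hx
      rcases hx with rfl | ⟨c', _, hxc, _⟩
      · exact csInf_le hbdb hcC
      · exact hxc
    have hbT : b ∈ {d' | ∃ c', IsGap C c' d' ∧ d' ≤ c ∧ d - c ≤ d' - c'} :=
      ⟨a, ⟨hlt, haC, hbC, hIoo⟩, hbc, hyp c d hgC hbc⟩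
    have hL : leftBridgeStart C' c d ≤ leftBridgeStart C c d := by
      unfold leftBridgeStart
      refine csSup_le ⟨sInf C', Set.mem_union_left _ rfl⟩ ?_
      intro x hx
      simp only [Set.mem_union, Set.mem_singleton_iff, Set.mem_setOf_eq] at hx
      rcases hx with rfl | ⟨c', hg', hxc, hlen⟩
      · rw [hsInf']
        exact le_csSup hbddL (Set.mem_union_right _ hbT)
      · exact le_csSup hbddL (Set.mem_union_right _ ⟨c', (gap_of' c' x hg').1, hxc, hlen⟩)
    have hbddR : BddBelow ({sSup C} ∪ {c' | ∃ d', IsGap C c' d' ∧ d ≤ c' ∧ d - c ≤ d' - c'}) := by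
      refine ⟨d, ?_⟩
      rintro x hx
      simp only [Set.mem_union, Set.mem_singleton_iff, Set.mem_setOf_eq] at hx
      rcases hx with rfl | ⟨d', _, hdx, _⟩
      · exact le_csSup hbda hdC
      · exact hdx
    have hR : rightBridgeEnd C c d ≤ rightBridgeEnd C' c d := by
      unfold rightBridgeEnd
      refine le_csInf ⟨sSup C', Set.mem_union_left _ rfl⟩ ?_
      intro x hx
      simp only [Set.mem_union, Set.mem_singleton_iff, Set.mem_setOf_eq] at hx
      rcases hx with rfl | ⟨d', hg', hdx, hlen⟩
      · rw [hsSup']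
        exact csInf_le hbddR (Set.mem_union_left _ rfl)
      · exact csInf_le hbddR (Set.mem_union_right _ ⟨d', (gap_of' x d' hg').1, hdx, hlen⟩)
    refine iInf_le_of_le ⟨(c, d), hgC⟩ (ENNReal.ofReal_le_ofReal ?_)
    refine min_le_min ?_ ?_
    · exact div_le_div_of_nonneg_right (by linarith) hdc.le
    · exact div_le_div_of_nonneg_right (by linarith) hdc.le
end

section
/- Let m ≥ 1 and k ≥ 4 be integers, let q ∈ (1,2) satisfy |q − q_k| < q_k^{−(m+2)k−3}, and define ε_q = 1 − π_q((1^{k−1}0)^∞). Then −q_k^{−(m+1)k+1} < ε_q < q_k^{−(m+2)k+1}. -/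
open Set

private lemma nat_le_two_mul_pow (n : ℕ) : (n : ℝ) ≤ 2 * (3/2 : ℝ) ^ n := by
  induction n with
  | zero => norm_num
  | succ n ih =>
    have h : (1:ℝ) ≤ (3/2 : ℝ) ^ n := one_le_pow₀ (by norm_num)
    push_cast
    calc (n:ℝ) + 1 ≤ 2*(3/2:ℝ)^n + (3/2:ℝ)^n := by linarith
    _ = 2*(3/2:ℝ)^(n+1) := by ring

private lemma piQ_seqP_eq (k : ℕ) (hk : 1 ≤ k) (q : ℝ) (hq1 : 1 < q) :
    piQ q (seqP k) = 1/(q-1) - 1/(q^k-1) := by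
  have hq0 : 0 < q := lt_trans one_pos hq1
  have hr0 : (0:ℝ) ≤ q⁻¹ := by positivity
  have hr1 : q⁻¹ < 1 := inv_lt_one_of_one_lt₀ hq1
  have hgeom := summable_geometric_of_lt_one hr0 hr1
  have hg : Summable (fun j : ℕ => q⁻¹ ^ (j+1)) := by
    simpa [pow_succ'] using hgeom.mul_left q⁻¹
  set h : ℕ → ℝ := fun j => if j % k = k - 1 then q⁻¹ ^ (j+1) else 0 with hh
  have hh_nonneg : ∀ j, 0 ≤ h j := by
    intro j; simp only [hh]; split_ifs
    · positivity
    · exact le_rfl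
  have hh_le : ∀ j, h j ≤ q⁻¹ ^ (j+1) := by
    intro j; simp only [hh]; split_ifs
    · exact le_rfl
    · positivity
  have hhsum : Summable h := Summable.of_nonneg_of_le hh_nonneg hh_le hg
  have hsplit : (fun j : ℕ => seqP k j / q^(j+1)) = fun j => q⁻¹^(j+1) - h j := by
    funext j
    simp only [seqP, hh]
    split_ifs with hj
    · simp
    · simp [inv_pow, one_div]
  rw [piQ, hsplit, Summable.tsum_sub hg hhsum]
  have h1 : ∑' j:ℕ, q⁻¹^(j+1) = 1/(q-1) := by
    have e : ∑' j:ℕ, q⁻¹^(j+1) = q⁻¹ * ∑' j:ℕ, q⁻¹^j := by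
      simp only [pow_succ']; exact tsum_mul_left
    rw [e, tsum_geometric_of_lt_one hr0 hr1]
    have hqne : q ≠ 0 := ne_of_gt hq0
    have hq1ne : q - 1 ≠ 0 := sub_ne_zero.2 (ne_of_gt hq1)
    field_simp
  have h2 : ∑' j:ℕ, h j = 1/(q^k-1) := by
    have hinj : Function.Injective (fun n : ℕ => n*k + (k-1)) := by
      intro a b hab
      simp only [add_left_inj] at hab
      exact Nat.eq_of_mul_eq_mul_right (by omega) hab
    have hsupp : Function.support h ⊆ Set.range (fun n : ℕ => n*k + (k-1)) := by
      intro j hj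
      have hjk : j % k = k - 1 := by
        by_contra hc; simp [hh, hc] at hj
      refine ⟨j / k, ?_⟩
      show j / k * k + (k - 1) = j
      have h1 := Nat.div_add_mod j k
      have h2 : j / k * k = k * (j / k) := Nat.mul_comm _ _
      omega
    rw [← hinj.tsum_eq hsupp]
    have hval : ∀ n : ℕ, h (n*k + (k-1)) = (q⁻¹^k)^(n+1) := by
      intro n
      have hmod : (n*k + (k-1)) % k = k - 1 := by
        rw [Nat.mul_comm, Nat.mul_add_mod]
        exact Nat.mod_eq_of_lt (by omega)
      have he : n*k + (k-1) + 1 = k*(n+1) := by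
        have h' : n*k + (k-1) + 1 = n*k + k := by omega
        rw [h']; ring
      simp [hh, hmod, he, pow_mul]
    rw [tsum_congr hval]
    have hrk0 : (0:ℝ) ≤ q⁻¹^k := by positivity
    have hrk1 : q⁻¹^k < 1 := pow_lt_one₀ hr0 hr1 (by omega)
    have e : ∑' n:ℕ, (q⁻¹^k)^(n+1) = q⁻¹^k * ∑' n:ℕ, (q⁻¹^k)^n := by
      simp only [pow_succ']; exact tsum_mul_left
    rw [e, tsum_geometric_of_lt_one hrk0 hrk1]
    have hqk1 : (1:ℝ) < q^k := one_lt_pow₀ hq1 (by omega)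
    have hqkne : q^k ≠ 0 := by positivity
    have hne : q^k - 1 ≠ 0 := sub_ne_zero.2 (ne_of_gt hqk1)
    rw [inv_pow]
    field_simp
  rw [h1, h2]


set_option maxHeartbeats 1000000 in
theorem bounding_epsilon_q
    (m k : ℕ) (hm : 1 ≤ m) (hk : 4 ≤ k) (qk : ℝ) (hqk : IsBonacci k qk)
    (q : ℝ) (hq : q ∈ Set.Ioo (1 : ℝ) 2)
    (hclose : |q - qk| < qk ^ (-(((m : ℤ) + 2) * (k : ℤ)) - 3)) :
    -qk ^ (-(((m : ℤ) + 1) * (k : ℤ)) + 1) < 1 - piQ q (seqP k) ∧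
      1 - piQ q (seqP k) < qk ^ (-(((m : ℤ) + 2) * (k : ℤ)) + 1) := by
  obtain ⟨⟨hqk1, hqk2⟩, hroot⟩ := hqk
  obtain ⟨hq1, hq2⟩ := hq
  have hk1 : 1 ≤ k := by omega
  have hqk0 : (0:ℝ) < qk := lt_trans one_pos hqk1
  have hqkne : qk ≠ 0 := ne_of_gt hqk0
  have hqkm1 : qk - 1 ≠ 0 := sub_ne_zero.2 (ne_of_gt hqk1)
  have hkey : qk ^ k * (qk - 1) = qk ^ k - 1 := by
    have hgeo : ∑ i ∈ Finset.range k, qk ^ i = (qk ^ k - 1) / (qk - 1) :=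
      geom_sum_eq (by intro hc; rw [hc] at hqk1; exact lt_irrefl 1 hqk1) k
    have h := hroot.trans hgeo
    field_simp at h
    linear_combination h
  have hkey2 : qk ^ k * (2 - qk) = 1 := by nlinarith [hkey]
  have hqk19 : (19/10 : ℝ) < qk := by
    by_contra hcon
    push_neg at hcon
    have h4 : qk ^ 4 ≤ qk ^ k := pow_le_pow_right₀ (le_of_lt hqk1) hk
    have h5 : (0:ℝ) < 2 - qk := by linarith
    have h6 : qk^4*(2-qk) ≤ qk^k*(2-qk) := mul_le_mul_of_nonneg_right h4 (le_of_lt h5)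
    have hgt : 1 < qk^4*(2-qk) := by
      nlinarith [mul_nonneg (mul_nonneg (sub_nonneg.2 hcon) (sub_pos.2 hqk1).le) (sq_nonneg qk),
        mul_nonneg (sub_nonneg.2 hcon) (sq_nonneg (qk-1)), sq_nonneg (qk-1),
        sq_nonneg (qk^2-qk-1), mul_nonneg (sub_pos.2 hqk1).le (sq_nonneg (qk^2-qk-1))]
    rw [hkey2] at h6
    linarith
  set e : ℤ := -(((m:ℤ)+2)*(k:ℤ)) - 3 with he_def
  have heta_pos : (0:ℝ) < qk ^ e := zpow_pos hqk0 e
  have he15 : e ≤ -15 := by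
    have hmk : (12:ℤ) ≤ ((m:ℤ)+2)*(k:ℤ) := by
      have hm' : (1:ℤ) ≤ (m:ℤ) := by exact_mod_cast hm
      have hk' : (4:ℤ) ≤ (k:ℤ) := by exact_mod_cast hk
      nlinarith
    omega
  have heta_small : qk ^ e ≤ 1/100 := by
    have heta_le : qk ^ e ≤ qk ^ (-15 : ℤ) := zpow_le_zpow_right₀ (le_of_lt hqk1) he15
    have h15 : (100:ℝ) ≤ qk ^ (15:ℕ) :=
      le_trans (by norm_num) (pow_le_pow_left₀ (by norm_num) (le_of_lt hqk19) 15)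
    refine le_trans heta_le ?_
    rw [show ((-15:ℤ)) = -((15:ℕ):ℤ) by norm_num, zpow_neg, zpow_natCast, one_div]
    exact inv_anti₀ (by norm_num) h15
  have hq189 : (189/100:ℝ) < q := by
    have habs := abs_lt.mp hclose
    linarith [habs.1]
  have hq0 : (0:ℝ) < q := by linarith
  have hqpow1 : (1:ℝ) < q ^ k := one_lt_pow₀ hq1 (by omega)
  have hD : (0:ℝ) < (q-1)*(q^k-1) := mul_pos (by linarith) (by linarith)
  rw [piQ_seqP_eq k hk1 q hq1]
  have hgs2 := geom_sum₂_mul q qk k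
  have hgs1 := geom_sum₂_mul q qk (k+1)
  set S2 : ℝ := ∑ i ∈ Finset.range k, q ^ i * qk ^ (k - 1 - i) with hS2def
  have hS1 : (∑ i ∈ Finset.range (k+1), q ^ i * qk ^ (k + 1 - 1 - i)) = qk * S2 + q^k := by
    rw [Finset.sum_range_succ]
    have hlast : k + 1 - 1 - k = 0 := by omega
    rw [hlast, pow_zero, mul_one]
    congr 1
    rw [hS2def, Finset.mul_sum]
    refine Finset.sum_congr rfl ?_
    intro i hi
    have hi' : i < k := Finset.mem_range.mp hi
    have hei : k + 1 - 1 - i = (k - 1 - i) + 1 := by omega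
    rw [hei, pow_succ]
    ring
  have hNqk : qk^(k+1) - 2*qk^k + 1 = 0 := by
    rw [pow_succ]; nlinarith [hkey]
  have hfac : q^(k+1) - 2*q^k + 1 = (q - qk) * (q^k + (qk - 2) * S2) := by
    rw [hS1] at hgs1
    linear_combination (2 - qk) * hgs2 + hNqk
  have hE : 1 - (1/(q-1) - 1/(q^k-1)) =
      ((q - qk) * (q^k + (qk - 2) * S2)) / ((q-1)*(q^k-1)) := by
    rw [← hfac]
    have h1 : q - 1 ≠ 0 := by intro hc; nlinarith
    have h2 : q^k - 1 ≠ 0 := by intro hc; nlinarith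
    field_simp
    ring
  rw [hE]
  set T : ℝ := q^k + (qk - 2) * S2 with hTdef
  have hS2nonneg : 0 ≤ S2 := Finset.sum_nonneg (fun i _ => by positivity)
  have hS2le : S2 ≤ (q*qk)^k := by
    have hstep1 : S2 ≤ (k:ℝ) * 2^(k-1) := by
      rw [hS2def]
      refine le_trans (Finset.sum_le_card_nsmul _ _ ((2:ℝ)^(k-1)) ?_) ?_
      · intro i hi
        have hi' : i < k := Finset.mem_range.mp hi
        have h2a : q^i ≤ 2^i := pow_le_pow_left₀ (le_of_lt hq0) (le_of_lt hq2) i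
        have h2b : qk^(k-1-i) ≤ 2^(k-1-i) := pow_le_pow_left₀ (le_of_lt hqk0) (le_of_lt hqk2) _
        calc q^i * qk^(k-1-i) ≤ 2^i * 2^(k-1-i) :=
              mul_le_mul h2a h2b (by positivity) (by positivity)
        _ = 2^(k-1) := by rw [← pow_add]; congr 1; omega
      · simp [Finset.card_range, nsmul_eq_mul]
    have h3 : (3:ℝ) ≤ q*qk := by
      have hqq : (189/100:ℝ)*(19/10) ≤ q*qk :=
        mul_le_mul (le_of_lt hq189) (le_of_lt hqk19) (by norm_num) (by linarith)
      linarith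
    have h2k : (2:ℝ)*2^(k-1) = 2^k := by
      rw [← pow_succ']
      congr 1
      omega
    calc S2 ≤ (k:ℝ) * 2^(k-1) := hstep1
    _ ≤ (2*(3/2:ℝ)^k) * 2^(k-1) :=
        mul_le_mul_of_nonneg_right (nat_le_two_mul_pow k) (by positivity)
    _ = (3/2:ℝ)^k * (2*2^(k-1)) := by ring
    _ = (3/2:ℝ)^k * 2^k := by rw [h2k]
    _ = 3^k := by rw [← mul_pow]; norm_num
    _ ≤ (q*qk)^k := pow_le_pow_left₀ (by norm_num) h3 k
  have hTub : T ≤ q^k := by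
    have hneg : (qk - 2) * S2 ≤ 0 := mul_nonpos_of_nonpos_of_nonneg (by linarith) hS2nonneg
    rw [hTdef]; linarith
  have hTlb : 0 ≤ T := by
    have h1' : (2 - qk) * S2 ≤ (2-qk) * ((q*qk)^k) :=
      mul_le_mul_of_nonneg_left hS2le (by linarith)
    have h2' : (2-qk)*(q*qk)^k = q^k := by
      rw [mul_pow]
      calc (2-qk)*(q^k*qk^k) = (qk^k*(2-qk))*q^k := by ring
      _ = q^k := by rw [hkey2]; ring
    have hTe : T = q^k - (2-qk)*S2 := by rw [hTdef]; ring
    rw [hTe]; linarith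
  have h13 : (13:ℝ) ≤ qk^4 :=
    le_trans (by norm_num) (pow_le_pow_left₀ (by norm_num) (le_of_lt hqk19) 4)
  have h12 : (12:ℝ) ≤ q^k := by
    calc (12:ℝ) ≤ (189/100:ℝ)^4 := by norm_num
    _ ≤ q^4 := pow_le_pow_left₀ (by norm_num) (le_of_lt hq189) 4
    _ ≤ q^k := pow_le_pow_right₀ (le_of_lt hq1) hk
  have hDlb : q^k ≤ qk^4 * ((q-1)*(q^k-1)) := by
    have h1' : (0:ℝ) ≤ (q-1)*(q^k-1) := le_of_lt hD
    nlinarith [mul_nonneg (sub_nonneg.2 h13) h1',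
      mul_nonneg (sub_nonneg.2 (le_of_lt hq189)) (sub_nonneg.2 h12)]
  have hnum_ub : (q-qk)*T < qk^e * (qk^4 * ((q-1)*(q^k-1))) := by
    have a1 : (q-qk)*T ≤ |q-qk| * T := mul_le_mul_of_nonneg_right (le_abs_self _) hTlb
    have a2 : |q-qk| * T ≤ |q-qk| * q^k := mul_le_mul_of_nonneg_left hTub (abs_nonneg _)
    have a3 : |q-qk| * q^k < qk^e * q^k := mul_lt_mul_of_pos_right hclose (by positivity)
    have a4 : qk^e * q^k ≤ qk^e * (qk^4 * ((q-1)*(q^k-1))) :=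
      mul_le_mul_of_nonneg_left hDlb (le_of_lt heta_pos)
    linarith
  have hnum_lb : -(qk^e * (qk^4 * ((q-1)*(q^k-1)))) < (q-qk)*T := by
    have a1 : (-|q-qk|) * T ≤ (q-qk)*T :=
      mul_le_mul_of_nonneg_right (neg_abs_le _) hTlb
    have a2 : |q-qk| * T ≤ |q-qk| * q^k := mul_le_mul_of_nonneg_left hTub (abs_nonneg _)
    have a3 : |q-qk| * q^k < qk^e * q^k := mul_lt_mul_of_pos_right hclose (by positivity)
    have a4 : qk^e * q^k ≤ qk^e * (qk^4 * ((q-1)*(q^k-1))) :=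
      mul_le_mul_of_nonneg_left hDlb (le_of_lt heta_pos)
    nlinarith
  have h4z : qk ^ (e + 4) = qk^e * qk^4 := by
    rw [zpow_add₀ hqkne, show ((4:ℤ)) = ((4:ℕ):ℤ) by norm_num, zpow_natCast]
  have hexp_ub : (-(((m:ℤ)+2)*(k:ℤ)) + 1) = e + 4 := by rw [he_def]; ring
  constructor
  · -- lower bound
    have hlt : -(qk ^ (e+4)) < (q - qk) * T / ((q-1)*(q^k-1)) := by
      rw [lt_div_iff₀ hD]
      calc -(qk^(e+4)) * ((q-1)*(q^k-1)) = -(qk^e * (qk^4 * ((q-1)*(q^k-1)))) := by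
            rw [h4z]; ring
      _ < (q-qk)*T := hnum_lb
    have hle : qk ^ (e+4) ≤ qk ^ (-(((m:ℤ)+1)*(k:ℤ)) + 1) := by
      apply zpow_le_zpow_right₀ (le_of_lt hqk1)
      have hk' : (0:ℤ) ≤ (k:ℤ) := by positivity
      rw [he_def]
      nlinarith
    calc -qk ^ (-(((m:ℤ)+1)*(k:ℤ)) + 1) ≤ -(qk ^ (e+4)) := by linarith
    _ < (q - qk) * T / ((q-1)*(q^k-1)) := hlt
  · -- upper bound
    rw [hexp_ub, div_lt_iff₀ hD]
    calc (q-qk)*T < qk^e * (qk^4 * ((q-1)*(q^k-1))) := hnum_ub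
    _ = qk^(e+4) * ((q-1)*(q^k-1)) := by rw [h4z]; ring
end
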